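/- arXiv:math/0507589 — 2 statements merged into one kernel-verified Lean document; each statement's English description precedes it below -/
import Mathlib

section
/- Let f : G → G be an improved relative train track map. If σ = σ1 ⊙ σ2 is a hard splitting and ρ is an initial subpath of σ2, then σ1ρ = σ1 ⊙ ρ is a hard splitting. -/
/-!
A formal model of (improved) relative train track maps, following
Bestvina–Handel ("Train tracks and automorphisms of free groups") and
Bestvina–Feighn–Handel ("The Tits alternative for Out(Fₙ) I", Thm 5.1.5),
as used in Bridson–Groves, "Free-group automorphisms, train tracks and the
beaded decomposition".

A graph self-map is recorded via its action on oriented edges; edge paths are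
modelled as lists of oriented edges (`bar` is orientation reversal), and the
tightening operator (free reduction of edge paths) is part of the data,
axiomatised by its characteristic properties.
-/

namespace Beaded

inductive StratumKind : Type
  | zero
  | parabolic
  | exponential
  deriving DecidableEq

/-- A self-map of a finite graph together with the tightening operator. -/
structure GraphSelfMap where
  /-- the set of oriented edges -/
  Edge : Type
  fintypeEdge : Fintype Edge
  /-- orientation reversal -/
  bar : Edge → Edge
  bar_bar : ∀ e, bar (bar e) = e
  bar_ne : ∀ e, bar e ≠ e
  /-- the image of an oriented edge: a nontrivial tight edge path -/
  fEdge : Edge → List Edge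
  fEdge_bar : ∀ e, fEdge (bar e) = ((fEdge e).map bar).reverse
  fEdge_ne : ∀ e, fEdge e ≠ []
  fEdge_tight : ∀ e l₁ l₂ e', fEdge e ≠ l₁ ++ e' :: bar e' :: l₂
  /-- tightening (free reduction) of edge paths -/
  tighten : List Edge → List Edge
  tighten_step : ∀ l₁ l₂ e, tighten (l₁ ++ e :: bar e :: l₂) = tighten (l₁ ++ l₂)
  tighten_reduced : ∀ l l₁ l₂ e, tighten l ≠ l₁ ++ e :: bar e :: l₂
  tighten_eq_self : ∀ l, (∀ l₁ l₂ e, l ≠ l₁ ++ e :: bar e :: l₂) → tighten l = l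

namespace GraphSelfMap

variable (G : GraphSelfMap)

/-- edge paths in `G` -/
abbrev Path := List G.Edge

/-- the reverse of an edge path -/
def revPath (ρ : G.Path) : G.Path := (ρ.map G.bar).reverse

/-- a tight (immersed) edge path -/
def Tight (ρ : G.Path) : Prop := ∀ l₁ l₂ e, ρ ≠ l₁ ++ e :: G.bar e :: l₂

/-- the `m`-th power `τ^m` of a path -/
def pathPow (τ : G.Path) (m : ℕ) : G.Path := (List.replicate m τ).flatten

/-- the (unreduced) image `f(ρ)` of an edge path -/
def fWord (ρ : G.Path) : G.Path := ρ.flatMap G.fEdge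

/-- the (unreduced) iterated image `f^k(ρ)` -/
def fIter : ℕ → G.Path → G.Path
  | 0, ρ => ρ
  | k + 1, ρ => G.fWord (fIter k ρ)

/-- `f_#(ρ)`, the tightened image of a path -/
def fSharp (ρ : G.Path) : G.Path := G.tighten (G.fWord ρ)

/-- `f^k_#(ρ)`, the tightened `k`-th iterated image of a path -/
def fSharpIter (k : ℕ) (ρ : G.Path) : G.Path := G.tighten (G.fIter k ρ)

/-- one step of free reduction -/
def Red (x y : G.Path) : Prop :=
  ∃ l₁ l₂ e, x = l₁ ++ e :: G.bar e :: l₂ ∧ y = l₁ ++ l₂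

/-- iterated free reduction (a "choice of tightening") -/
def Reduces : G.Path → G.Path → Prop := Relation.ReflTransGen G.Red

/-- Some choice of tightening of the concatenation `a ++ b` involves a
cancellation between (a residue of) `a` and (a residue of) `b`. -/
def CrossCancellation (a b : G.Path) : Prop :=
  ∃ a' b', G.Reduces a a' ∧ G.Reduces b b' ∧
    ∃ e a₀ b₀, a' = a₀ ++ [e] ∧ b' = G.bar e :: b₀

/-- `σ₁ ⊙ σ₂` is a hard splitting: for every `k ≥ 1` and every choice of
tightening of `f^k(σ₁)f^k(σ₂)` there is no cancellation between the image of
`σ₁` and the image of `σ₂`. -/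
def HardSplitting (σ₁ σ₂ : G.Path) : Prop :=
  G.Tight (σ₁ ++ σ₂) ∧
    ∀ k, 1 ≤ k → ¬ G.CrossCancellation (G.fIter k σ₁) (G.fIter k σ₂)

/-- a hard splitting of `ρ` into the (ordered) list of pieces `ps` -/
def HardSplittingList (ρ : G.Path) (ps : List G.Path) : Prop :=
  ρ = ps.flatten ∧
    ∀ i : ℕ, G.HardSplitting ((ps.take i).flatten) ((ps.drop i).flatten)

/-- an (ordinary) splitting `σ₁ · σ₂` -/
def Splitting (σ₁ σ₂ : G.Path) : Prop :=
  G.Tight (σ₁ ++ σ₂) ∧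
    ∀ k : ℕ, G.fSharpIter k (σ₁ ++ σ₂) = G.fSharpIter k σ₁ ++ G.fSharpIter k σ₂

/-- a Nielsen path: a nontrivial (tight) path with `f_#(σ) = σ` -/
def NielsenPath (ρ : G.Path) : Prop := ρ ≠ [] ∧ G.Tight ρ ∧ G.fSharp ρ = ρ

/-- an indivisible Nielsen path: a Nielsen edge path that is not a
concatenation of two nontrivial Nielsen edge paths -/
def IndivNielsen (ρ : G.Path) : Prop :=
  G.NielsenPath ρ ∧
    ¬ ∃ ρ₁ ρ₂, ρ₁ ≠ [] ∧ ρ₂ ≠ [] ∧ ρ = ρ₁ ++ ρ₂ ∧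
        G.NielsenPath ρ₁ ∧ G.NielsenPath ρ₂

/-- `r`-monochromatic paths: edges are `r`-monochromatic, and sub edge-paths
of `f^r_#(ρ)` are `r`-monochromatic whenever `ρ` is -/
inductive RMono (r : ℕ) : G.Path → Prop
  | edge (e : G.Edge) : RMono r [e]
  | sub (ρ σ : G.Path) : RMono r ρ → σ <:+: G.fSharpIter r ρ → RMono r σ

/-- `σ` is a `k`-step nibbled future of `ρ`, with respect to the path map `g` -/
inductive NibbledFutureWith (g : G.Path → G.Path) : ℕ → G.Path → G.Path → Prop
  | zero (ρ : G.Path) : NibbledFutureWith g 0 ρ ρ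
  | step (k : ℕ) (ρ σ σ' : G.Path) :
      NibbledFutureWith g k ρ σ → σ' <:+: g σ → NibbledFutureWith g (k + 1) ρ σ'

/-- `σ` is a `k`-step nibbled future of `ρ` -/
def NibbledFuture (k : ℕ) (ρ σ : G.Path) : Prop :=
  G.NibbledFutureWith G.fSharp k ρ σ

/-- `σ` is a nibbled future of `ρ` -/
def IsNibbledFuture (ρ σ : G.Path) : Prop := ∃ k, G.NibbledFuture k ρ σ

/-- a `(J,f)`-atom: a `1`-monochromatic edge path of length at most `J`
admitting no non-vacuous hard splitting into edge paths -/
def Atom (J : ℕ) (π : G.Path) : Prop :=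
  G.RMono 1 π ∧ π.length ≤ J ∧ π ≠ [] ∧
    ∀ σ₁ σ₂, π = σ₁ ++ σ₂ → σ₁ ≠ [] → σ₂ ≠ [] → ¬ G.HardSplitting σ₁ σ₂

/-- the splitting `ps` refines the splitting `qs`: the pieces of `qs` are
obtained by grouping together consecutive pieces of `ps` -/
def RefinesList (ps qs : List G.Path) : Prop :=
  ∃ css : List (List G.Path), css.flatten = ps ∧ css.map List.flatten = qs

/-- the subpath of `χ` starting at position `i` and of length `l` is
displayed: there is a hard splitting of `χ` immediately on either side -/
def DisplayedAt (χ : G.Path) (i l : ℕ) : Prop :=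
  0 < l ∧ i + l ≤ χ.length ∧
    G.HardSplitting (χ.take i) (χ.drop i) ∧
    G.HardSplitting (χ.take (i + l)) (χ.drop (i + l))

/-- the maximum length of `f^k_#(E)` over all edges `E` -/
noncomputable def maxImageLength (k : ℕ) : ℕ :=
  haveI := G.fintypeEdge
  Finset.univ.sup fun e : G.Edge => (G.fSharpIter k [e]).length

/-! labelled tightening, used to trace the pasts of edges under an arbitrary
choice of tightening -/

/-- the image of a labelled edge path, labels being inherited -/
def lFWord (w : List (ℕ × G.Edge)) : List (ℕ × G.Edge) :=
  w.flatMap fun p => (G.fEdge p.2).map fun e => (p.1, e)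

/-- one step of free reduction of labelled paths -/
def LRed (x y : List (ℕ × G.Edge)) : Prop :=
  ∃ w₁ w₂ s t e, x = w₁ ++ (s, e) :: (t, G.bar e) :: w₂ ∧ y = w₁ ++ w₂

def LReduces : List (ℕ × G.Edge) → List (ℕ × G.Edge) → Prop :=
  Relation.ReflTransGen G.LRed

/-- `v` is obtained from the labelled path `w` by `i` applications of `f`,
tightening completely (with an arbitrary choice of tightening) at each step;
the label of each edge of `v` records the position of its past in `w`. -/
inductive LabelledIter : ℕ → List (ℕ × G.Edge) → List (ℕ × G.Edge) → Prop
  | zero (w : List (ℕ × G.Edge)) : LabelledIter 0 w w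
  | step (i : ℕ) (w v u : List (ℕ × G.Edge)) :
      LabelledIter i w v → G.LReduces (G.lFWord v) u →
      G.Tight (u.map Prod.snd) → LabelledIter (i + 1) w u

end GraphSelfMap

/-- a graph self-map together with a filtration by `f`-invariant subgraphs,
recorded via the weight (= stratum index) of each edge, and the type of each
stratum -/
structure PreRTT extends GraphSelfMap where
  /-- the number of strata (`ω` in the paper) -/
  numStrata : ℕ
  /-- the weight (stratum index) of each edge, an element of `{1, …, ω}` -/
  weight : Edge → ℕ
  weight_pos : ∀ e, 1 ≤ weight e
  weight_le : ∀ e, weight e ≤ numStrata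
  weight_bar : ∀ e, weight (bar e) = weight e
  /-- the filtration is `f`-invariant -/
  weight_fEdge : ∀ e e', e' ∈ fEdge e → weight e' ≤ weight e
  /-- the type (zero / parabolic / exponential) of each stratum -/
  kind : ℕ → StratumKind

namespace PreRTT

variable (G : PreRTT)

/-- the weight of a path: the highest stratum it meets -/
def pathWeight (ρ : G.Path) : ℕ := (ρ.map G.weight).foldr max 0

/-- the derivative map `Df`: an oriented edge is sent to the first oriented
edge of its image -/
def Df (e : G.Edge) : G.Edge := (G.fEdge e).headD e

/-- the turn `{e₁, e₂}` (an unordered pair of oriented edges at a common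
vertex) is illegal: some iterate of `Df` makes it degenerate -/
def IllegalTurn (e₁ e₂ : G.Edge) : Prop := ∃ k : ℕ, G.Df^[k] e₁ = G.Df^[k] e₂

/-- a path is `r`-legal if it contains no illegal turn in `H_r` -/
def RLegal (r : ℕ) (ρ : G.Path) : Prop :=
  ∀ l₁ l₂ e₁ e₂, ρ = l₁ ++ e₁ :: e₂ :: l₂ →
    G.weight e₁ = r → G.weight e₂ = r → ¬ G.IllegalTurn (G.bar e₁) e₂

open Classical in
/-- the number of illegal turns in `H_r` occurring in a path -/
noncomputable def numIllegalTurns (r : ℕ) (ρ : G.Path) : ℕ :=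
  ((Finset.range ρ.length).filter fun i =>
    ∃ l₁ l₂ e₁ e₂, l₁.length = i ∧ ρ = l₁ ++ e₁ :: e₂ :: l₂ ∧
      G.weight e₁ = r ∧ G.weight e₂ = r ∧ G.IllegalTurn (G.bar e₁) e₂).card

/-- the set `P_r` of Bestvina–Feighn–Handel (Section 4.2) -/
def Pset (r : ℕ) : Set G.Path :=
  { ρ | G.Tight ρ ∧ G.pathWeight ρ ≤ r ∧
      (∀ k, 1 ≤ k → G.numIllegalTurns r (G.fSharpIter k ρ) = 1) ∧
      (∀ k, 1 ≤ k →
        (∀ e, (G.fSharpIter k ρ).head? = some e → G.weight e = r) ∧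
        (∀ e, (G.fSharpIter k ρ).getLast? = some e → G.weight e = r)) ∧
      ∃ B, ∀ k, ((G.fSharpIter k ρ).countP fun e => G.weight e == r) ≤ B }

/-- an edge of a parabolic stratum -/
def ParabolicEdge (e : G.Edge) : Prop := G.kind (G.weight e) = StratumKind.parabolic

/-- an edge of an exponential stratum -/
def ExponentialEdge (e : G.Edge) : Prop := G.kind (G.weight e) = StratumKind.exponential

/-- a linear edge: a parabolic edge with `f(E) = E ⊙ τ^m`, `τ` a Nielsen path -/
def LinearEdge (e : G.Edge) : Prop :=
  G.ParabolicEdge e ∧ ∃ τ m, G.NielsenPath τ ∧ 1 ≤ m ∧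
    G.fEdge e = e :: G.pathPow τ m ∧ G.HardSplitting [e] (G.pathPow τ m)

/-- `ρ` has the standard form `E_i τ̄^k Ē_j` of a growing exceptional path,
where `τ` is a Nielsen path, `k ≥ 1`, `E_i, E_j` are parabolic edges with
`f(E_i) = E_i ⊙ τ^m`, `f(E_j) = E_j ⊙ τ^n` and `n > m > 0`. -/
def IsGEPForm (ρ : G.Path) : Prop :=
  ∃ (Ei Ej : G.Edge) (τ : G.Path) (k m n : ℕ),
    G.NielsenPath τ ∧ 1 ≤ k ∧ 0 < m ∧ m < n ∧
    G.ParabolicEdge Ei ∧ G.ParabolicEdge Ej ∧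
    G.fEdge Ei = Ei :: G.pathPow τ m ∧ G.HardSplitting [Ei] (G.pathPow τ m) ∧
    G.fEdge Ej = Ej :: G.pathPow τ n ∧ G.HardSplitting [Ej] (G.pathPow τ n) ∧
    ρ = Ei :: (G.pathPow (G.revPath τ) k ++ [G.bar Ej])

/-- a growing exceptional path (GEP) -/
def GEP (ρ : G.Path) : Prop := G.IsGEPForm ρ ∨ G.IsGEPForm (G.revPath ρ)

/-- a pseudo-exceptional path (ΨEP): a proper initial sub edge-path of a path
in GEP form (resp. a proper terminal sub edge-path, when it is the reverse
that is in GEP form) -/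
def PsiEP (π : G.Path) : Prop :=
  ∃ ρ : G.Path, π ≠ [] ∧ π.length < ρ.length ∧
    ((G.IsGEPForm ρ ∧ π <+: ρ) ∨ (G.IsGEPForm (G.revPath ρ) ∧ π <:+ ρ))

/-- a bead: a GEP, a ΨEP, a `(J,f)`-atom, or an indivisible Nielsen path of
length at most `J` -/
def Bead (J : ℕ) (π : G.Path) : Prop :=
  G.GEP π ∨ G.PsiEP π ∨ G.Atom J π ∨ (G.IndivNielsen π ∧ π.length ≤ J)

/-- a `(J,f)`-beaded path: one admitting a hard splitting into beads -/
def Beaded (J : ℕ) (ρ : G.Path) : Prop :=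
  ∃ ps : List G.Path, G.HardSplittingList ρ ps ∧ ∀ π ∈ ps, G.Bead J π

/-- a basic path of height `i` (where `E_i` is the unique edge of the
parabolic stratum `H_i`): `E_iγĒ_i`, `E_iγ` or `γĒ_i` with `γ` in `G_{i-1}` -/
def BasicPath (i : ℕ) (Ei : G.Edge) (π : G.Path) : Prop :=
  ∃ γ : G.Path, G.pathWeight γ < i ∧
    (π = Ei :: (γ ++ [G.bar Ei]) ∨ π = Ei :: γ ∨ π = γ ++ [G.bar Ei])

/-- the conclusion of the First Decomposition Theorem for edge paths of length
at most `n`, with constant `V`: every nibbled future of such a path admits a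
hard splitting into edge paths, each of which is either a nibbled future of a
GEP or has length at most `V` -/
def FirstDecompProp (n V : ℕ) : Prop :=
  ∀ ρ : G.Path, G.Tight ρ → ρ.length ≤ n →
    ∀ (k : ℕ) (σ : G.Path), G.NibbledFuture k ρ σ →
      ∃ ps, G.HardSplittingList σ ps ∧
        ∀ π ∈ ps, (∃ g, G.GEP g ∧ G.IsNibbledFuture g π) ∨ π.length ≤ V

/-- an `r`-seed: a nonempty subpath of `f(E)`, `E` an edge of `H_r`, maximal
subject to lying in `G_{r-1}` -/
def SeedOcc (E : G.Edge) (σ₁ ρ σ₂ : G.Path) : Prop :=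
  ρ ≠ [] ∧ G.pathWeight ρ < G.weight E ∧ G.fEdge E = σ₁ ++ ρ ++ σ₂ ∧
    (∀ e, σ₁.getLast? = some e → G.weight E ≤ G.weight e) ∧
    (∀ e, σ₂.head? = some e → G.weight E ≤ G.weight e)

end PreRTT

/-- a relative train track map (Bestvina–Handel, Section 5) -/
structure RTT extends PreRTT where
  /-- (RTT-i) `Df` maps the oriented edges of an exponential stratum to
  oriented edges of the same stratum -/
  rtt_i : ∀ e, toPreRTT.ExponentialEdge e → weight (toPreRTT.Df e) = weight e
  /-- (RTT-iii) the image of an `r`-legal path lying in an exponential stratum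
  `H_r` contains no illegal turns in `H_r` -/
  rtt_iii : ∀ r, kind r = StratumKind.exponential →
    ∀ ρ : List Edge, (∀ e ∈ ρ, weight e = r) → toPreRTT.RLegal r ρ →
      toPreRTT.RLegal r (toGraphSelfMap.fWord ρ)

/-- an improved relative train track map
(Bestvina–Feighn–Handel, Theorem 5.1.5) -/
structure IRTT extends RTT where
  /-- every periodic Nielsen path has period one -/
  nielsen_period_one : ∀ ρ : List Edge, toGraphSelfMap.Tight ρ → ρ ≠ [] →
    ∀ k, 1 ≤ k → toGraphSelfMap.fSharpIter k ρ = ρ → toGraphSelfMap.fSharp ρ = ρ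
  /-- the image of an edge of a zero stratum lies lower in the filtration -/
  zero_strata : ∀ e, kind (weight e) = StratumKind.zero →
    toPreRTT.pathWeight (fEdge e) < weight e
  /-- (ne-i), (ne-ii): each parabolic stratum is a single edge `E` with
  `f(E) = E ⊙ u` for a path `u` lower in the filtration -/
  parabolic_strata : ∀ i, 1 ≤ i → i ≤ numStrata → kind i = StratumKind.parabolic →
    ∃ E, weight E = i ∧ (∀ e', weight e' = i → e' = E ∨ e' = bar E) ∧
      ∃ u, fEdge E = E :: u ∧ toPreRTT.pathWeight u < i ∧
        toGraphSelfMap.HardSplitting [E] u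
  /-- (eg-i) each exponential stratum carries at most one indivisible Nielsen
  path, up to orientation -/
  eg_unique : ∀ r, kind r = StratumKind.exponential →
    ∀ ρ ρ', toGraphSelfMap.IndivNielsen ρ → toGraphSelfMap.IndivNielsen ρ' →
      toPreRTT.pathWeight ρ = r → toPreRTT.pathWeight ρ' = r →
      ρ' = ρ ∨ ρ' = toGraphSelfMap.revPath ρ

/-- The conclusion of Lemma `Power1` for the iterate `f₁ = f^{k₁}_#`. -/
def Power1Prop (G : IRTT) (k₁ : ℕ) : Prop :=
  -- (A) exponential-weight indivisible Nielsen paths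
  (∀ (r : ℕ) (E : G.Edge) (σ : G.Path),
      G.kind r = StratumKind.exponential → G.weight E = r →
      G.IndivNielsen σ → G.pathWeight σ = r →
      (σ.length < (G.fSharpIter k₁ [E]).length ∧
       (∀ σ₀, σ₀ <:+: σ → σ₀ ≠ [] → σ₀.length < σ.length →
          G.RLegal r (G.fSharpIter k₁ σ₀)) ∧
       (∀ σ₀ E', σ₀ <+: σ → σ₀ ≠ [] → σ₀.length < σ.length → σ.head? = some E' →
          ∃ ξ, G.fSharpIter k₁ σ₀ = G.fEdge E' ++ ξ ∧
            G.HardSplitting (G.fEdge E') ξ) ∧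
       (∀ σ₁ E'', σ₁ <:+ σ → σ₁ ≠ [] → σ₁.length < σ.length →
          σ.getLast? = some E'' →
          ∃ ξ', G.fSharpIter k₁ σ₁ = ξ' ++ G.fEdge E'' ∧
            G.HardSplitting ξ' (G.fEdge E'')))) ∧
  -- (B) parabolic-weight indivisible Nielsen paths inside images of linear edges
  (∀ (σ : G.Path) (E E' : G.Edge) (η : G.Path) (m : ℕ),
      G.kind (G.pathWeight σ) = StratumKind.parabolic → G.IndivNielsen σ →
      (∃ E₁, G.LinearEdge E₁ ∧ σ <:+: G.fEdge E₁) →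
      G.LinearEdge E → G.LinearEdge E' → G.NielsenPath η →
      (σ = E :: (G.pathPow η m ++ [G.bar E']) ∨
       σ = E :: (G.pathPow (G.revPath η) m ++ [G.bar E'])) →
      ((∀ σ₀, σ₀ <+: σ → σ₀ ≠ [] → σ₀.length < σ.length →
          ∃ j ξ'', m < j ∧
            G.HardSplittingList (G.fSharpIter k₁ σ₀)
              ([E] :: List.replicate j η ++ [ξ''])) ∧
       (∀ σ₁, σ₁ <:+ σ → σ₁ ≠ [] → σ₁.length < σ.length →
          ∃ j ξ', m < j ∧
            G.HardSplittingList (G.fSharpIter k₁ σ₁)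
              (ξ' :: List.replicate j (G.revPath η) ++ [[G.bar E']]))))

/-- `f : G → G` represents the automorphism `ψ` of the free group: a marking
of the edges by elements of the free group, compatible with orientation
reversal, generating the free group (π₁-surjectivity of the marking), and
intertwining `f` with `ψ`. -/
structure RepresentsData (n : ℕ) (G : GraphSelfMap)
    (ψ : MulAut (FreeGroup (Fin n))) where
  edgeMark : G.Edge → FreeGroup (Fin n)
  edgeMark_bar : ∀ e, edgeMark (G.bar e) = (edgeMark e)⁻¹
  generates : Subgroup.closure (Set.range edgeMark) = ⊤
  induces : ∀ e, ((G.fEdge e).map edgeMark).prod = ψ (edgeMark e)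

/-! A cancellation between `f^k(σ₁)` and `f^k(ρ)` in some tightening is still a
cancellation between `f^k(σ₁)` and `f^k(σ₂) = f^k(ρ) f^k(τ)`, where `σ₂ = ρτ`:
the reductions performed inside `f^k(ρ)` can be performed verbatim inside
`f^k(ρ) f^k(τ)`, leaving `f^k(τ)` untouched at the end. -/

namespace GraphSelfMap

variable {G : GraphSelfMap}

theorem Tight.of_isInfix {x y : G.Path} (h : G.Tight x) (hyx : y <:+: x) : G.Tight y := by
  obtain ⟨s, t, rfl⟩ := hyx
  rintro l₁ l₂ e rfl
  exact h (s ++ l₁) (l₂ ++ t) e (by simp)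

theorem fIter_append (k : ℕ) (a b : G.Path) :
    G.fIter k (a ++ b) = G.fIter k a ++ G.fIter k b := by
  induction k with
  | zero => rfl
  | succ k ih => simp only [fIter, ih, fWord, List.flatMap_append]

theorem Reduces.append_right {x y : G.Path} (h : G.Reduces x y) (z : G.Path) :
    G.Reduces (x ++ z) (y ++ z) := by
  induction h with
  | refl => exact .refl
  | tail _ hred ih =>
    obtain ⟨l₁, l₂, e, rfl, rfl⟩ := hred
    exact ih.tail ⟨l₁, l₂ ++ z, e, by simp, by simp⟩

theorem CrossCancellation.append_right {a b : G.Path} (h : G.CrossCancellation a b)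
    (c : G.Path) : G.CrossCancellation a (b ++ c) := by
  obtain ⟨_, _, ha, hb, e, a₀, b₀, rfl, rfl⟩ := h
  exact ⟨_, _, ha, hb.append_right c, e, a₀, b₀ ++ c, rfl, rfl⟩

end GraphSelfMap

/-- (Lemma `HardSplitLemma`.)  Let `f : G → G` be an improved relative train
track map.  If `σ = σ₁ ⊙ σ₂` is a hard splitting and `ρ` is an initial subpath
of `σ₂`, then `σ₁ρ = σ₁ ⊙ ρ` is a hard splitting. -/
theorem hard_splitting_of_initial_subpath (G : IRTT) (σ₁ σ₂ ρ : G.Path)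
    (h : G.HardSplitting σ₁ σ₂) (hρ : ρ <+: σ₂) :
    G.HardSplitting σ₁ ρ := by
  obtain ⟨τ, rfl⟩ := hρ
  have hprefix : σ₁ ++ ρ <+: σ₁ ++ (ρ ++ τ) :=
    (List.prefix_append_right_inj σ₁).2 (List.prefix_append ρ τ)
  refine ⟨h.1.of_isInfix hprefix.isInfix, fun k hk hcc => h.2 k hk ?_⟩
  rw [GraphSelfMap.fIter_append]
  exact hcc.append_right _

end Beaded
end

section
/- Let f : G → G be an improved relative train track map. Every edge path in G admits a unique maximal hard splitting into edge paths. -/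
/-!
A splitting of `ρ` into nonempty pieces is determined by the set of positions at which it cuts
`ρ`, and it is hard exactly when `ρ.take c ⊙ ρ.drop c` for each of its cut points `c`. Cutting `ρ`
at every such position therefore gives a hard splitting that refines all the others, and it is
unique because refinement is antisymmetric on splittings into nonempty pieces.
-/

lemma Composition.range_sizeUpTo {n : ℕ} (c : Composition n) :
    Set.range c.sizeUpTo = Fin.val '' (c.boundaries : Set (Fin (n + 1))) := by
  ext j
  simp only [Composition.boundaries, Finset.coe_map, Finset.coe_univ, Set.image_univ,
    Set.mem_range, Set.mem_image, exists_exists_eq_and]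
  constructor
  · rintro ⟨i, rfl⟩
    refine ⟨⟨min i c.length, Nat.lt_succ_of_le (min_le_right _ _)⟩, ?_⟩
    rcases le_total i c.length with h | h
    · simp [Composition.boundary, min_eq_left h]
    · simp [Composition.boundary, min_eq_right h, c.sizeUpTo_ofLength_le i h]
  · rintro ⟨i, rfl⟩
    exact ⟨i, rfl⟩

namespace Beaded

section Splittings

variable {α : Type*}

/-- Indices `i ≥ ps.length` contribute the endpoint `ps.flatten.length`. -/
def cutPoints (ps : List (List α)) : Set ℕ :=
  Set.range fun i => ((ps.take i).flatten).length

lemma take_length_flatten_take (ps : List (List α)) (i : ℕ) :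
    ps.flatten.take ((ps.take i).flatten).length = (ps.take i).flatten := by
  have := List.take_left (l₁ := (ps.take i).flatten) (l₂ := (ps.drop i).flatten)
  rwa [← List.flatten_append, List.take_append_drop] at this

lemma drop_length_flatten_take (ps : List (List α)) (i : ℕ) :
    ps.flatten.drop ((ps.take i).flatten).length = (ps.drop i).flatten := by
  have := List.drop_left (l₁ := (ps.take i).flatten) (l₂ := (ps.drop i).flatten)
  rwa [← List.flatten_append, List.take_append_drop] at this

lemma le_length_flatten_of_mem_cutPoints {ps : List (List α)} {c : ℕ}
    (hc : c ∈ cutPoints ps) : c ≤ ps.flatten.length := by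
  obtain ⟨i, rfl⟩ := hc
  exact List.IsPrefix.length_le
    ⟨(ps.drop i).flatten, by rw [← List.flatten_append, List.take_append_drop]⟩

lemma length_flatten_take_add (ps : List (List α)) (i j : ℕ) :
    ((ps.take (i + j)).flatten).length =
      ((ps.take i).flatten).length + (((ps.drop i).take j).flatten).length := by
  rw [List.take_add, List.flatten_append, List.length_append]

lemma refines_of_cutPoints_subset {ps qs : List (List α)} (hps : ∀ π ∈ ps, π ≠ [])
    (hflat : ps.flatten = qs.flatten) (hcut : cutPoints qs ⊆ cutPoints ps) :
    ∃ css : List (List (List α)), css.flatten = ps ∧ css.map List.flatten = qs := by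
  induction qs generalizing ps with
  | nil =>
    refine ⟨[], ?_, rfl⟩
    rw [List.flatten_nil, List.flatten_eq_nil_iff] at hflat
    exact (List.eq_nil_iff_forall_not_mem.2 fun π hπ => hps π hπ (hflat π hπ)).symm
  | cons q qs ih =>
    obtain ⟨i, hi⟩ := hcut ⟨1, rfl⟩
    simp only [List.take_one, List.head?_cons, Option.toList_some, List.flatten_cons,
      List.flatten_nil, List.append_nil] at hi
    have hq : (ps.take i).flatten = q := by
      rw [← take_length_flatten_take, hi, hflat, List.flatten_cons, List.take_left]
    have hrest : (ps.drop i).flatten = qs.flatten := by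
      rw [← drop_length_flatten_take, hi, hflat, List.flatten_cons, List.drop_left]
    have hcut' : cutPoints qs ⊆ cutPoints (ps.drop i) := by
      rintro _ ⟨j, rfl⟩
      obtain ⟨k, hk⟩ := hcut ⟨j + 1, rfl⟩
      simp only [List.take_succ_cons, List.flatten_cons, List.length_append] at hk
      rcases le_or_gt i k with hik | hki
      · refine ⟨k - i, ?_⟩
        rw [← Nat.add_sub_cancel' hik, length_flatten_take_add, hi] at hk
        simpa using hk
      · -- a cut point of `ps` before its `i`-th one lies inside `q`, so it is `0`
        have := length_flatten_take_add ps k (i - k)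
        rw [Nat.add_sub_cancel' hki.le, hi] at this
        refine ⟨0, ?_⟩
        simp only [List.take_zero, List.flatten_nil, List.length_nil]
        omega
    obtain ⟨css, hcss, rfl⟩ := ih (fun π hπ => hps π (List.mem_of_mem_drop hπ)) hrest hcut'
    exact ⟨ps.take i :: css, by rw [List.flatten_cons, hcss, List.take_append_drop], by
      rw [List.map_cons, hq]⟩

lemma cutPoints_splitWrtComposition (l : List α) (c : Composition l.length) :
    cutPoints (l.splitWrtComposition c) = Set.range c.sizeUpTo := by
  simp only [cutPoints, List.length_flatten, List.map_take,
    List.sum_take_map_length_splitWrtComposition]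

/-- Cutting `l` at the positions singled out by `P` is done by the composition of `l.length`
whose boundaries are those positions. -/
lemma exists_flatten_eq_cutPoints_eq (l : List α) (P : ℕ → Prop) (h₀ : P 0)
    (hl : P l.length) :
    ∃ ps : List (List α), (∀ π ∈ ps, π ≠ []) ∧ ps.flatten = l ∧
      cutPoints ps = {c | c ≤ l.length ∧ P c} := by
  classical
  let S : CompositionAsSet l.length :=
    ⟨Finset.univ.filter fun j => P j, by simpa using h₀, by simpa using hl⟩
  refine ⟨l.splitWrtComposition S.toComposition, fun π hπ =>
    List.ne_nil_of_length_pos (List.length_pos_of_mem_splitWrtComposition hπ),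
    List.flatten_splitWrtComposition _ _, ?_⟩
  rw [cutPoints_splitWrtComposition, Composition.range_sizeUpTo,
    CompositionAsSet.toComposition_boundaries]
  ext c
  simp only [S, Finset.coe_filter, Finset.mem_univ, true_and, Set.mem_image, Set.mem_ofPred_eq]
  constructor
  · rintro ⟨j, hj, rfl⟩
    exact ⟨Nat.lt_succ_iff.1 j.2, hj⟩
  · rintro ⟨hc, hP⟩
    exact ⟨⟨c, Nat.lt_succ_of_le hc⟩, hP, rfl⟩

lemma length_le_length_flatten {css : List (List α)} (hne : ∀ g ∈ css, g ≠ []) :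
    css.length ≤ css.flatten.length := by
  rw [List.length_flatten]
  simpa using List.length_le_sum_of_one_le (css.map List.length) (by
    simpa [Nat.one_le_iff_ne_zero] using hne)

lemma flatten_eq_map_flatten_of_length_le {css : List (List (List α))}
    (hne : ∀ g ∈ css, g ≠ []) (hlen : css.flatten.length ≤ css.length) :
    css.flatten = css.map List.flatten := by
  induction css with
  | nil => rfl
  | cons g css ih =>
    have hg := List.length_pos_iff.2 (hne g List.mem_cons_self)
    have hne' : ∀ g ∈ css, g ≠ [] := fun g' hg' => hne g' (List.mem_cons_of_mem _ hg')
    have := length_le_length_flatten hne'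
    simp only [List.flatten_cons, List.length_append, List.length_cons] at hlen
    obtain ⟨π, rfl⟩ := List.length_eq_one_iff.1 (show g.length = 1 by omega)
    simp [ih hne' (by omega)]

lemma refines_antisymm {ps qs : List (List α)}
    (hpq : ∃ css : List (List (List α)), css.flatten = ps ∧ css.map List.flatten = qs)
    (hqp : ∃ css : List (List (List α)), css.flatten = qs ∧ css.map List.flatten = ps)
    (hps : ∀ π ∈ ps, π ≠ []) (hqs : ∀ π ∈ qs, π ≠ []) : ps = qs := by
  obtain ⟨css, rfl, rfl⟩ := hpq
  obtain ⟨dss, hdss, hdss'⟩ := hqp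
  have groups_ne {ess : List (List (List α))} (h : ∀ π ∈ ess.map List.flatten, π ≠ []) :
      ∀ g ∈ ess, g ≠ [] := by
    rintro g hg rfl
    exact h [] (List.mem_map_of_mem hg) rfl
  refine flatten_eq_map_flatten_of_length_le (groups_ne hqs) ?_
  calc css.flatten.length = dss.length := by rw [← hdss', List.length_map]
    _ ≤ dss.flatten.length := length_le_length_flatten (groups_ne (hdss' ▸ hps))
    _ = css.length := by rw [hdss, List.length_map]

end Splittings

namespace GraphSelfMap

variable {G : GraphSelfMap}

lemma fIter_nil (k : ℕ) : G.fIter k [] = [] := by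
  induction k with
  | zero => rfl
  | succ k ih => rw [fIter, ih]; rfl

lemma Reduces.eq_nil {x : G.Path} (h : G.Reduces [] x) : x = [] := by
  induction h with
  | refl => rfl
  | tail _ hred ih =>
    subst ih
    obtain ⟨l₁, l₂, e, h, -⟩ := hred
    simp at h

lemma not_crossCancellation_nil_left (b : G.Path) : ¬ G.CrossCancellation [] b := by
  rintro ⟨a', b', ha, -, e, a₀, b₀, rfl, -⟩
  simpa using ha.eq_nil

lemma not_crossCancellation_nil_right (a : G.Path) : ¬ G.CrossCancellation a [] := by
  rintro ⟨a', b', -, hb, e, a₀, b₀, -, rfl⟩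
  simpa using hb.eq_nil

lemma hardSplitting_nil_left {ρ : G.Path} (hρ : G.Tight ρ) : G.HardSplitting [] ρ :=
  ⟨hρ, fun k _ => by rw [fIter_nil]; exact not_crossCancellation_nil_left _⟩

lemma hardSplitting_nil_right {ρ : G.Path} (hρ : G.Tight ρ) : G.HardSplitting ρ [] :=
  ⟨by rwa [List.append_nil], fun k _ => by
    rw [fIter_nil]
    exact not_crossCancellation_nil_right _⟩

def HardSplitsAt (ρ : G.Path) (c : ℕ) : Prop := G.HardSplitting (ρ.take c) (ρ.drop c)

lemma hardSplitsAt_zero {ρ : G.Path} (hρ : G.Tight ρ) : G.HardSplitsAt ρ 0 := by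
  simpa [HardSplitsAt] using hardSplitting_nil_left hρ

lemma hardSplitsAt_length {ρ : G.Path} (hρ : G.Tight ρ) : G.HardSplitsAt ρ ρ.length := by
  simpa [HardSplitsAt] using hardSplitting_nil_right hρ

lemma hardSplittingList_iff {ρ : G.Path} {ps : List G.Path} :
    G.HardSplittingList ρ ps ↔ ρ = ps.flatten ∧ ∀ c ∈ cutPoints ps, G.HardSplitsAt ρ c := by
  refine and_congr_right fun hρ => ?_
  subst hρ
  simp only [cutPoints, Set.forall_mem_range, HardSplitsAt, take_length_flatten_take,
    drop_length_flatten_take]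

end GraphSelfMap

/-- Let `f : G → G` be an improved relative train track map.  Every edge path
in `G` admits a unique maximal hard splitting into (nontrivial) edge paths,
i.e. a hard splitting refining every other hard splitting into edge paths. -/
theorem unique_maximal_hard_splitting (G : IRTT) (ρ : G.Path) (hρ : G.Tight ρ) :
    ∃! ps : List G.Path,
      G.HardSplittingList ρ ps ∧ (∀ π ∈ ps, π ≠ []) ∧
        ∀ qs : List G.Path, G.HardSplittingList ρ qs → (∀ π ∈ qs, π ≠ []) →
          G.RefinesList ps qs := by
  obtain ⟨ps, hne, hflat, hcuts⟩ := exists_flatten_eq_cutPoints_eq ρ _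
    (GraphSelfMap.hardSplitsAt_zero hρ) (GraphSelfMap.hardSplitsAt_length hρ)
  have hps : G.HardSplittingList ρ ps :=
    GraphSelfMap.hardSplittingList_iff.2 ⟨hflat.symm, fun c hc => (hcuts ▸ hc).2⟩
  have hmax (qs : List G.Path) (hqs : G.HardSplittingList ρ qs) : G.RefinesList ps qs := by
    obtain ⟨hq, hqcuts⟩ := GraphSelfMap.hardSplittingList_iff.1 hqs
    refine refines_of_cutPoints_subset hne (hflat.trans hq) fun c hc => ?_
    rw [hcuts]
    exact ⟨hq ▸ le_length_flatten_of_mem_cutPoints hc, hqcuts c hc⟩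
  refine ⟨ps, ⟨hps, hne, fun qs hqs _ => hmax qs hqs⟩, fun qs ⟨hqs, hqne, hqmax⟩ => ?_⟩
  exact refines_antisymm (hqmax ps hps hne) (hmax qs hqs) hqne hne

end Beaded
end
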